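/- Let A →^i B ⇉^{f,g} C and D →^j E ⇉^{h,k} F be two equalizer diagrams in a monoidal category such that f and g have a common retraction s (s∘f = s∘g = id_B) and h, k have a common retraction t, and suppose tensoring with each of A, B, E, F preserves equalizers. Then A ⊗ D →^{i⊗j} B ⊗ E ⇉^{f⊗h, g⊗k} C ⊗ F is again an equalizer, and it is coreflexive. -/

import Mathlib

open CategoryTheory CategoryTheory.Limits CategoryTheory.MonoidalCategory

/-- Let `A →ⁱ B ⇉^{f,g} C` and `D →ʲ E ⇉^{h,k} F` be two equalizer diagrams in a
monoidal category, the pairs `(f,g)` and `(h,k)` admitting common retractions `s`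
and `t` (so the equalizers are coreflexive), and suppose tensoring (on either side)
with each of `A`, `B`, `E`, `F` preserves equalizers.  Then
`A ⊗ D →^{i⊗j} B ⊗ E ⇉^{f⊗h, g⊗k} C ⊗ F` is again an equalizer, and the pair
`(f ⊗ h, g ⊗ k)` is coreflexive with common retraction `s ⊗ t`. -/
theorem stmt2 {𝒞 : Type*} [Category 𝒞] [MonoidalCategory 𝒞]
    {A B C D E F : 𝒞}
    (i : A ⟶ B) (f g : B ⟶ C) (j : D ⟶ E) (h k : E ⟶ F)
    (hifg : i ≫ f = i ≫ g) (hjhk : j ≫ h = j ≫ k)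
    (lim₁ : IsLimit (Fork.ofι i hifg)) (lim₂ : IsLimit (Fork.ofι j hjhk))
    (s : C ⟶ B) (t : F ⟶ E)
    (hsf : f ≫ s = 𝟙 B) (hsg : g ≫ s = 𝟙 B)
    (hth : h ≫ t = 𝟙 E) (htk : k ≫ t = 𝟙 E)
    (flatAl : PreservesLimitsOfShape WalkingParallelPair (tensorLeft A))
    (flatAr : PreservesLimitsOfShape WalkingParallelPair (tensorRight A))
    (flatBl : PreservesLimitsOfShape WalkingParallelPair (tensorLeft B))
    (flatBr : PreservesLimitsOfShape WalkingParallelPair (tensorRight B))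
    (flatEl : PreservesLimitsOfShape WalkingParallelPair (tensorLeft E))
    (flatEr : PreservesLimitsOfShape WalkingParallelPair (tensorRight E))
    (flatFl : PreservesLimitsOfShape WalkingParallelPair (tensorLeft F))
    (flatFr : PreservesLimitsOfShape WalkingParallelPair (tensorRight F)) :
    Nonempty (IsLimit (Fork.ofι (i ⊗ₘ j)
        (show (i ⊗ₘ j) ≫ (f ⊗ₘ h) = (i ⊗ₘ j) ≫ (g ⊗ₘ k) by
          rw [MonoidalCategory.tensorHom_comp_tensorHom, MonoidalCategory.tensorHom_comp_tensorHom, hifg, hjhk]))) ∧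
      (f ⊗ₘ h) ≫ (s ⊗ₘ t) = 𝟙 (B ⊗ E) ∧ (g ⊗ₘ k) ≫ (s ⊗ₘ t) = 𝟙 (B ⊗ E) := by
  refine ⟨?_, by rw [tensorHom_comp_tensorHom, hsf, hth, id_tensorHom_id],
    by rw [tensorHom_comp_tensorHom, hsg, htk, id_tensorHom_id]⟩
  -- mapped equalizers
  have limE : IsLimit (Fork.ofι ((tensorRight E).map i)
      (by simp only [← (tensorRight E).map_comp, hifg]) :
      Fork ((tensorRight E).map f) ((tensorRight E).map g)) :=
    isLimitForkMapOfIsLimit (tensorRight E) hifg lim₁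
  have limF : IsLimit (Fork.ofι ((tensorRight F).map i)
      (by simp only [← (tensorRight F).map_comp, hifg]) :
      Fork ((tensorRight F).map f) ((tensorRight F).map g)) :=
    isLimitForkMapOfIsLimit (tensorRight F) hifg lim₁
  have limA : IsLimit (Fork.ofι ((tensorLeft A).map j)
      (by simp only [← (tensorLeft A).map_comp, hjhk]) :
      Fork ((tensorLeft A).map h) ((tensorLeft A).map k)) :=
    isLimitForkMapOfIsLimit (tensorLeft A) hjhk lim₂
  have monoF : Mono (i ▷ F) := by
    have := mono_of_isLimit_fork limF
    simpa using this
  have monoE : Mono (i ▷ E) := by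
    have := mono_of_isLimit_fork limE
    simpa using this
  have monoA : Mono (A ◁ j) := by
    have := mono_of_isLimit_fork limA
    simpa using this
  refine ⟨Fork.IsLimit.mk' _ fun c => ?_⟩
  set u := c.ι with hu
  have hcond : u ≫ (f ⊗ₘ h) = u ≫ (g ⊗ₘ k) := c.condition
  -- u equalizes f ▷ E and g ▷ E
  have h1 : u ≫ (tensorRight E).map f = u ≫ (tensorRight E).map g := by
    have e1 : (f ⊗ₘ h) ≫ (𝟙 C ⊗ₘ t) = f ⊗ₘ 𝟙 E := by
      rw [tensorHom_comp_tensorHom, Category.comp_id, hth]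
    have e2 : (g ⊗ₘ k) ≫ (𝟙 C ⊗ₘ t) = g ⊗ₘ 𝟙 E := by
      rw [tensorHom_comp_tensorHom, Category.comp_id, htk]
    simp only [Functor.flip_obj_map, curriedTensor_map_app, ← tensorHom_id]
    rw [← e1, ← e2, ← Category.assoc, ← Category.assoc, hcond]
  -- u equalizes B ◁ h and B ◁ k
  have h2 : u ≫ (𝟙 B ⊗ₘ h) = u ≫ (𝟙 B ⊗ₘ k) := by
    have e1 : (f ⊗ₘ h) ≫ (s ⊗ₘ 𝟙 F) = 𝟙 B ⊗ₘ h := by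
      rw [tensorHom_comp_tensorHom, Category.comp_id, hsf]
    have e2 : (g ⊗ₘ k) ≫ (s ⊗ₘ 𝟙 F) = 𝟙 B ⊗ₘ k := by
      rw [tensorHom_comp_tensorHom, Category.comp_id, hsg]
    rw [← e1, ← e2, ← Category.assoc, ← Category.assoc, hcond]
  obtain ⟨v, hv⟩ := Fork.IsLimit.lift' limE u h1
  simp only [Fork.ι_ofι, Functor.flip_obj_map, curriedTensor_map_app] at hv
  -- v equalizes A ◁ h and A ◁ k
  have h3 : v ≫ (tensorLeft A).map h = v ≫ (tensorLeft A).map k := by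
    simp only [curriedTensor_obj_map]
    rw [← cancel_mono (i ▷ F)]
    have ex : ∀ m : E ⟶ F, (A ◁ m) ≫ (i ▷ F) = (i ▷ E) ≫ (𝟙 B ⊗ₘ m) := by
      intro m
      rw [← id_tensorHom, ← tensorHom_id, ← tensorHom_id, tensorHom_comp_tensorHom, tensorHom_comp_tensorHom]
      simp
    rw [Category.assoc, Category.assoc, ex h, ex k, ← Category.assoc, ← Category.assoc,
      hv, h2]
  obtain ⟨w, hw⟩ := Fork.IsLimit.lift' limA v h3
  simp only [Fork.ι_ofι, curriedTensor_obj_map] at hw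
  have hcomp : (A ◁ j) ≫ (i ▷ E) = i ⊗ₘ j := by
    rw [← id_tensorHom, ← tensorHom_id, tensorHom_comp_tensorHom]; simp
  refine ⟨w, ?_, ?_⟩
  · simp only [Fork.ι_ofι]
    rw [← hv, ← hw, Category.assoc, hcomp]
  · intro m hm
    have monoij : Mono (i ⊗ₘ j) := by
      rw [← hcomp]; exact mono_comp _ _
    rw [← cancel_mono (i ⊗ₘ j)]
    simp only [Fork.ι_ofι] at hm
    rw [hm, ← hv, ← hw, Category.assoc, hcomp]
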